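/- arXiv:2109.12590 — 2 statements merged into one kernel-verified Lean document; each statement's English description precedes it below -/
import Mathlib

section
/- Let R be a commutative ring, m ≥ 4, and M an m×m matrix over R with M_{1,1} = b₁, M_{1,2} = b₂, M_{1,m} = b₃, M_{2,1} = b₄, M_{2,2} = b₅, M_{2,m} = b₆, M_{m,1} = b₇, M_{m,2} = b₈, M_{1,j} = M_{2,j} = 0 for 3 ≤ j ≤ m−1, and M_{i,1} = M_{i,2} = 0 for 3 ≤ i ≤ m−1 (the remaining entries are arbitrary). Let Q = (M_{i+2,j+2})_{1 ≤ i,j ≤ m−2} be the lower-right (m−2)×(m−2) block and let Q₁ be the (m−3)×(m−3) matrix obtained from Q by deleting its last row and last column. Then det M = (b₁b₅ − b₂b₄)·det Q + (b₃b₄b₈ + b₂b₆b₇ − b₁b₆b₈ − b₃b₅b₇)·det Q₁. -/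
private lemma aux_sum3 {R : Type*} [AddCommMonoid R] {N : Type*} [Fintype N] [DecidableEq N]
    (f : N → R) (a b c : N) (hab : a ≠ b) (hac : a ≠ c) (hbc : b ≠ c)
    (h : ∀ x, x ≠ a → x ≠ b → x ≠ c → f x = 0) :
    ∑ x, f x = f a + f b + f c := by
  rw [← Finset.sum_subset (Finset.subset_univ ({a, b, c} : Finset N))
      (fun x _ hx => by
        simp only [Finset.mem_insert, Finset.mem_singleton, not_or] at hx
        exact h x hx.1 hx.2.1 hx.2.2)]
  rw [Finset.sum_insert (by simp [hab, hac]), Finset.sum_insert (by simp [hbc]),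
    Finset.sum_singleton, add_assoc]

private lemma aux_sum2 {R : Type*} [AddCommMonoid R] {N : Type*} [Fintype N] [DecidableEq N]
    (f : N → R) (a b : N) (hab : a ≠ b)
    (h : ∀ x, x ≠ a → x ≠ b → f x = 0) :
    ∑ x, f x = f a + f b := by
  rw [← Finset.sum_subset (Finset.subset_univ ({a, b} : Finset N))
      (fun x _ hx => by
        simp only [Finset.mem_insert, Finset.mem_singleton, not_or] at hx
        exact h x hx.1 hx.2)]
  rw [Finset.sum_insert (by simp [hab]), Finset.sum_singleton]

private lemma aux_val_succAbove {n : ℕ} (p : Fin (n + 1)) (i : Fin n) :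
    ((p.succAbove i : Fin (n + 1)) : ℕ) = if (i : ℕ) < (p : ℕ) then (i : ℕ) else (i : ℕ) + 1 := by
  simp only [Fin.succAbove, Fin.lt_def, Fin.coe_castSucc]
  split_ifs <;> simp

private lemma aux_det_row3 {R : Type*} [CommRing R] {n : ℕ}
    (A : Matrix (Fin (n + 1)) (Fin (n + 1)) R) (a b c : Fin (n + 1))
    (hab : a ≠ b) (hac : a ≠ c) (hbc : b ≠ c)
    (h : ∀ j, j ≠ a → j ≠ b → j ≠ c → A 0 j = 0) :
    A.det = (-1) ^ (a : ℕ) * A 0 a * (A.submatrix Fin.succ a.succAbove).det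
      + (-1) ^ (b : ℕ) * A 0 b * (A.submatrix Fin.succ b.succAbove).det
      + (-1) ^ (c : ℕ) * A 0 c * (A.submatrix Fin.succ c.succAbove).det := by
  rw [Matrix.det_succ_row_zero]
  exact aux_sum3 _ a b c hab hac hbc (fun x h1 h2 h3 => by simp [h x h1 h2 h3])

private lemma aux_det_row2 {R : Type*} [CommRing R] {n : ℕ}
    (A : Matrix (Fin (n + 1)) (Fin (n + 1)) R) (a b : Fin (n + 1))
    (hab : a ≠ b) (h : ∀ j, j ≠ a → j ≠ b → A 0 j = 0) :
    A.det = (-1) ^ (a : ℕ) * A 0 a * (A.submatrix Fin.succ a.succAbove).det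
      + (-1) ^ (b : ℕ) * A 0 b * (A.submatrix Fin.succ b.succAbove).det := by
  rw [Matrix.det_succ_row_zero]
  exact aux_sum2 _ a b hab (fun x h1 h2 => by simp [h x h1 h2])

private lemma aux_det_col1 {R : Type*} [CommRing R] {n : ℕ}
    (A : Matrix (Fin (n + 1)) (Fin (n + 1)) R) (a : Fin (n + 1))
    (h : ∀ i, i ≠ a → A i 0 = 0) :
    A.det = (-1) ^ (a : ℕ) * A a 0 * (A.submatrix a.succAbove Fin.succ).det := by
  rw [Matrix.det_succ_column_zero]
  exact Fintype.sum_eq_single a (fun x hx => by simp [h x hx])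

/-- Let `R` be a commutative ring, `m ≥ 4` (here `m = m₀ + 4`), and `M` an
`m × m` matrix over `R` whose first two rows vanish except in the first two and the last
columns, and whose first two columns vanish except in the first two and the last rows, with
`M₁₁ = b₁, M₁₂ = b₂, M₁ₘ = b₃, M₂₁ = b₄, M₂₂ = b₅, M₂ₘ = b₆, Mₘ₁ = b₇, Mₘ₂ = b₈`
(1-indexed). Let `Q` be the lower-right `(m−2) × (m−2)` block of `M` and let `Q₁` be `Q`
with its last row and column deleted. Then
`det M = (b₁b₅ − b₂b₄) det Q + (b₃b₄b₈ + b₂b₆b₇ − b₁b₆b₈ − b₃b₅b₇) det Q₁`. -/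
theorem statement7 {R : Type*} [CommRing R] (m : ℕ)
    (M : Matrix (Fin (m + 4)) (Fin (m + 4)) R) (b1 b2 b3 b4 b5 b6 b7 b8 : R)
    (h11 : M 0 0 = b1) (h12 : M 0 1 = b2) (h1m : M 0 (Fin.last (m + 3)) = b3)
    (h21 : M 1 0 = b4) (h22 : M 1 1 = b5) (h2m : M 1 (Fin.last (m + 3)) = b6)
    (hm1 : M (Fin.last (m + 3)) 0 = b7) (hm2 : M (Fin.last (m + 3)) 1 = b8)
    (hrow : ∀ j : Fin (m + 4), 2 ≤ (j : ℕ) → (j : ℕ) ≤ m + 2 → M 0 j = 0 ∧ M 1 j = 0)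
    (hcol : ∀ i : Fin (m + 4), 2 ≤ (i : ℕ) → (i : ℕ) ≤ m + 2 → M i 0 = 0 ∧ M i 1 = 0) :
    M.det =
      (b1 * b5 - b2 * b4) *
          Matrix.det (Matrix.of fun i j : Fin (m + 2) => M (i.addNat 2) (j.addNat 2)) +
        (b3 * b4 * b8 + b2 * b6 * b7 - b1 * b6 * b8 - b3 * b5 * b7) *
          Matrix.det (Matrix.of fun i j : Fin (m + 1) =>
            M ((i.addNat 2).castSucc) ((j.addNat 2).castSucc)) := by
  set dQ := Matrix.det (Matrix.of fun i j : Fin (m + 2) => M (i.addNat 2) (j.addNat 2)) with hdQ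
  set dQ1 := Matrix.det (Matrix.of fun i j : Fin (m + 1) =>
    M ((i.addNat 2).castSucc) ((j.addNat 2).castSucc)) with hdQ1
  -- entry rewriting helper
  have hME : ∀ {a a' b' b : Fin (m + 4)}, (a : ℕ) = (a' : ℕ) → (b : ℕ) = (b' : ℕ) →
      M a b = M a' b' := by
    intro a a' b' b h1 h2
    rw [Fin.ext h1, Fin.ext h2]
  -- identification of the big lower-right block
  have hQE : ∀ f g : Fin (m + 2) → Fin (m + 4),
      (∀ i, ((f i : Fin (m + 4)) : ℕ) = (i : ℕ) + 2) →
      (∀ j, ((g j : Fin (m + 4)) : ℕ) = (j : ℕ) + 2) →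
      (M.submatrix f g).det = dQ := by
    intro f g hf hg
    rw [hdQ]
    congr 1
    ext i j
    simp only [Matrix.submatrix_apply, Matrix.of_apply]
    exact hME (by simp [hf]) (by simp [hg])
  have hQ1E : ∀ f g : Fin (m + 1) → Fin (m + 4),
      (∀ i, ((f i : Fin (m + 4)) : ℕ) = (i : ℕ) + 2) →
      (∀ j, ((g j : Fin (m + 4)) : ℕ) = (j : ℕ) + 2) →
      (M.submatrix f g).det = dQ1 := by
    intro f g hf hg
    rw [hdQ1]
    congr 1
    ext i j
    simp only [Matrix.submatrix_apply, Matrix.of_apply]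
    exact hME (by simp [hf]) (by simp [hg])
  -- the two kinds of (m+2)-minors with a single nonzero entry in the first column
  have hP8 : ∀ f g : Fin (m + 2) → Fin (m + 4),
      (∀ i, ((f i : Fin (m + 4)) : ℕ) = (i : ℕ) + 2) →
      (∀ k, ((g k : Fin (m + 4)) : ℕ) = (k : ℕ) + 1) →
      (M.submatrix f g).det = (-1) ^ (m + 1) * (b8 * dQ1) := by
    intro f g hf hg
    rw [aux_det_col1 (n := m + 1) (M.submatrix f g) (Fin.last (m + 1)) ?_]
    · have e1 : (M.submatrix f g) (Fin.last (m + 1)) 0 = b8 := by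
        simp only [Matrix.submatrix_apply]
        rw [hME (a' := Fin.last (m + 3)) (b' := 1) (by simp [hf]) (by simp [hg])]
        exact hm2
      have e2 : ((M.submatrix f g).submatrix (Fin.last (m + 1)).succAbove Fin.succ).det = dQ1 := by
        rw [Matrix.submatrix_submatrix]
        exact hQ1E _ _ (fun i => by simp [hf]) (fun j => by simp [hg])
      rw [e1, e2]
      simp only [Fin.val_last]
      ring
    · intro i hi
      have hiv : (i : ℕ) ≠ m + 1 := fun h => hi (Fin.ext (by simp [h]))
      simp only [Matrix.submatrix_apply]
      rw [hME (a' := f i) (b' := 1) rfl (by simp [hg])]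
      exact (hcol (f i) (by rw [hf i]; omega) (by rw [hf i]; omega)).2
  have hP7 : ∀ f g : Fin (m + 2) → Fin (m + 4),
      (∀ i, ((f i : Fin (m + 4)) : ℕ) = (i : ℕ) + 2) →
      ((g 0 : ℕ) = 0) →
      (∀ k : Fin (m + 2), (k : ℕ) ≠ 0 → ((g k : Fin (m + 4)) : ℕ) = (k : ℕ) + 1) →
      (M.submatrix f g).det = (-1) ^ (m + 1) * (b7 * dQ1) := by
    intro f g hf hg0 hg
    rw [aux_det_col1 (n := m + 1) (M.submatrix f g) (Fin.last (m + 1)) ?_]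
    · have e1 : (M.submatrix f g) (Fin.last (m + 1)) 0 = b7 := by
        simp only [Matrix.submatrix_apply]
        rw [hME (a' := Fin.last (m + 3)) (b' := 0) (by simp [hf]) (by simp [hg0])]
        exact hm1
      have e2 : ((M.submatrix f g).submatrix (Fin.last (m + 1)).succAbove Fin.succ).det = dQ1 := by
        rw [Matrix.submatrix_submatrix]
        exact hQ1E _ _ (fun i => by simp [hf]) (fun j => by simp [hg (j.succ) (by simp)])
      rw [e1, e2]
      simp only [Fin.val_last]
      ring
    · intro i hi
      have hiv : (i : ℕ) ≠ m + 1 := fun h => hi (Fin.ext (by simp [h]))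
      simp only [Matrix.submatrix_apply]
      rw [hME (a' := f i) (b' := 0) rfl (by simp [hg0])]
      exact (hcol (f i) (by rw [hf i]; omega) (by rw [hf i]; omega)).1
  -- sign lemmas
  have hsOdd : ((-1 : R) ^ (m + 2)) * ((-1 : R) ^ (m + 1)) = -1 := by
    rw [← pow_add]
    exact Odd.neg_one_pow ⟨m + 1, by ring⟩
  have hsEven : ((-1 : R) ^ (m + 3)) * ((-1 : R) ^ (m + 1)) = 1 := by
    rw [← pow_add]
    exact Even.neg_one_pow ⟨m + 2, by ring⟩
  -- the three (m+3)-minors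
  have hN0 : (M.submatrix Fin.succ (Fin.succAbove (0 : Fin (m + 4)))).det
      = b5 * dQ - b6 * (b8 * dQ1) := by
    rw [aux_det_row2 (n := m + 2) _ (0 : Fin (m + 3)) (Fin.last (m + 2))
      (by simp [Fin.ext_iff]) ?_]
    · have e1 : (M.submatrix Fin.succ (Fin.succAbove (0 : Fin (m + 4)))) 0 0 = b5 := by
        simp only [Matrix.submatrix_apply]
        rw [hME (a' := 1) (b' := 1) (by simp) (by simp [aux_val_succAbove])]
        exact h22
      have e2 : (M.submatrix Fin.succ (Fin.succAbove (0 : Fin (m + 4)))) 0 (Fin.last (m + 2))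
          = b6 := by
        simp only [Matrix.submatrix_apply]
        rw [hME (a' := 1) (b' := Fin.last (m + 3)) (by simp) (by simp [aux_val_succAbove])]
        exact h2m
      have e3 : ((M.submatrix Fin.succ (Fin.succAbove (0 : Fin (m + 4)))).submatrix
          Fin.succ (Fin.succAbove (0 : Fin (m + 3)))).det = dQ := by
        rw [Matrix.submatrix_submatrix]
        exact hQE _ _ (fun i => by simp) (fun k => by simp [aux_val_succAbove])
      have e4 : ((M.submatrix Fin.succ (Fin.succAbove (0 : Fin (m + 4)))).submatrix
          Fin.succ (Fin.succAbove (Fin.last (m + 2)))).det = (-1) ^ (m + 1) * (b8 * dQ1) := by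
        rw [Matrix.submatrix_submatrix]
        exact hP8 _ _ (fun i => by simp)
          (fun k => by simp [aux_val_succAbove])
      rw [e1, e2, e3, e4]
      simp only [Fin.val_zero, Fin.val_last, pow_zero]
      linear_combination b6 * (b8 * dQ1) * hsOdd
    · intro j hj0 hjl
      have hv0 : (j : ℕ) ≠ 0 := fun h => hj0 (Fin.ext (by simp [h]))
      have hvl : (j : ℕ) ≠ m + 2 := fun h => hjl (Fin.ext (by simp [h]))
      simp only [Matrix.submatrix_apply]
      rw [hME (a' := 1) (b' := Fin.succAbove 0 j) (by simp) rfl]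
      refine (hrow _ ?_ ?_).2 <;> simp [aux_val_succAbove] <;> omega
  have hN1 : (M.submatrix Fin.succ (Fin.succAbove (1 : Fin (m + 4)))).det
      = b4 * dQ - b6 * (b7 * dQ1) := by
    rw [aux_det_row2 (n := m + 2) _ (0 : Fin (m + 3)) (Fin.last (m + 2))
      (by simp [Fin.ext_iff]) ?_]
    · have e1 : (M.submatrix Fin.succ (Fin.succAbove (1 : Fin (m + 4)))) 0 0 = b4 := by
        simp only [Matrix.submatrix_apply]
        rw [hME (a' := 1) (b' := 0) (by simp) (by simp [aux_val_succAbove])]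
        exact h21
      have e2 : (M.submatrix Fin.succ (Fin.succAbove (1 : Fin (m + 4)))) 0 (Fin.last (m + 2))
          = b6 := by
        simp only [Matrix.submatrix_apply]
        rw [hME (a' := 1) (b' := Fin.last (m + 3)) (by simp) (by simp [aux_val_succAbove])]
        exact h2m
      have e3 : ((M.submatrix Fin.succ (Fin.succAbove (1 : Fin (m + 4)))).submatrix
          Fin.succ (Fin.succAbove (0 : Fin (m + 3)))).det = dQ := by
        rw [Matrix.submatrix_submatrix]
        exact hQE _ _ (fun i => by simp) (fun k => by simp [aux_val_succAbove])
      have e4 : ((M.submatrix Fin.succ (Fin.succAbove (1 : Fin (m + 4)))).submatrix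
          Fin.succ (Fin.succAbove (Fin.last (m + 2)))).det = (-1) ^ (m + 1) * (b7 * dQ1) := by
        rw [Matrix.submatrix_submatrix]
        refine hP7 _ _ (fun i => by simp) (by simp [aux_val_succAbove]) ?_
        intro k hk
        have := k.isLt
        simp only [Function.comp_apply, aux_val_succAbove, Fin.coe_castSucc, Fin.val_one,
          Fin.val_last]
        split_ifs <;> omega
      rw [e1, e2, e3, e4]
      simp only [Fin.val_zero, Fin.val_last, pow_zero]
      linear_combination b6 * (b7 * dQ1) * hsOdd
    · intro j hj0 hjl
      have hv0 : (j : ℕ) ≠ 0 := fun h => hj0 (Fin.ext (by simp [h]))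
      have hvl : (j : ℕ) ≠ m + 2 := fun h => hjl (Fin.ext (by simp [h]))
      simp only [Matrix.submatrix_apply]
      rw [hME (a' := 1) (b' := Fin.succAbove 1 j) (by simp) rfl]
      refine (hrow _ ?_ ?_).2 <;>
        · simp only [aux_val_succAbove]
          have h1 : ((1 : Fin (m + 4)) : ℕ) = 1 := Fin.val_one _
          split_ifs <;> omega
  have hNl : (M.submatrix Fin.succ (Fin.succAbove (Fin.last (m + 3)))).det
      = (-1) ^ (m + 1) * (b4 * (b8 * dQ1) - b5 * (b7 * dQ1)) := by
    rw [aux_det_row2 (n := m + 2) _ (0 : Fin (m + 3)) (1 : Fin (m + 3))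
      (by simp [Fin.ext_iff]) ?_]
    · have e1 : (M.submatrix Fin.succ (Fin.succAbove (Fin.last (m + 3)))) 0 0 = b4 := by
        simp only [Matrix.submatrix_apply]
        rw [hME (a' := 1) (b' := 0) (by simp) (by simp [aux_val_succAbove])]
        exact h21
      have e2 : (M.submatrix Fin.succ (Fin.succAbove (Fin.last (m + 3)))) 0 1 = b5 := by
        simp only [Matrix.submatrix_apply]
        rw [hME (a' := 1) (b' := 1) (by simp) (by simp [aux_val_succAbove])]
        exact h22
      have e3 : ((M.submatrix Fin.succ (Fin.succAbove (Fin.last (m + 3)))).submatrix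
          Fin.succ (Fin.succAbove (0 : Fin (m + 3)))).det = (-1) ^ (m + 1) * (b8 * dQ1) := by
        rw [Matrix.submatrix_submatrix]
        exact hP8 _ _ (fun i => by simp) (fun k => by simp [aux_val_succAbove])
      have e4 : ((M.submatrix Fin.succ (Fin.succAbove (Fin.last (m + 3)))).submatrix
          Fin.succ (Fin.succAbove (1 : Fin (m + 3)))).det = (-1) ^ (m + 1) * (b7 * dQ1) := by
        rw [Matrix.submatrix_submatrix]
        refine hP7 _ _ (fun i => by simp) (by simp [aux_val_succAbove]) ?_
        intro k hk
        have := k.isLt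
        simp only [Function.comp_apply, aux_val_succAbove, Fin.coe_castSucc]
        have h1 : ((1 : Fin (m + 3)) : ℕ) = 1 := Fin.val_one _
        have h2 : ((Fin.last (m + 3)) : ℕ) = m + 3 := Fin.val_last _
        split_ifs <;> omega
      rw [e1, e2, e3, e4]
      simp only [Fin.val_zero, Fin.val_one, pow_zero, pow_one]
      ring
    · intro j hj0 hj1
      have hv0 : (j : ℕ) ≠ 0 := fun h => hj0 (Fin.ext (by simp [h]))
      have hv1 : (j : ℕ) ≠ 1 := fun h => hj1 (Fin.ext (by simp [h]))
      simp only [Matrix.submatrix_apply]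
      rw [hME (a' := 1) (b' := Fin.succAbove (Fin.last (m + 3)) j) (by simp) rfl]
      refine (hrow _ ?_ ?_).2 <;>
        · simp only [aux_val_succAbove, Fin.val_last]
          have := j.isLt
          split_ifs <;> omega
  -- expand along the first row
  rw [aux_det_row3 (n := m + 3) M 0 1 (Fin.last (m + 3))
    (by simp [Fin.ext_iff]) (by simp [Fin.ext_iff]) (by simp [Fin.ext_iff]) ?_]
  · rw [h11, h12, h1m, hN0, hN1, hNl]
    simp only [Fin.val_zero, Fin.val_one, Fin.val_last, pow_zero, pow_one]
    linear_combination b3 * (b4 * (b8 * dQ1) - b5 * (b7 * dQ1)) * hsEven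
  · intro j hj0 hj1 hjl
    have hv0 : (j : ℕ) ≠ 0 := fun h => hj0 (Fin.ext (by simp [h]))
    have hv1 : (j : ℕ) ≠ 1 := fun h => hj1 (Fin.ext (by simp [h]))
    have hvl : (j : ℕ) ≠ m + 3 := fun h => hjl (Fin.ext (by simp [h]))
    have := j.isLt
    exact (hrow j (by omega) (by omega)).1
end

section
/- The function μ defined on (−π,π) by μ(ω) = (2ω − sin 2ω)/(2 sin²ω) for ω ≠ 0 and μ(0) = 0 (equivalently μ(ω) = ω/sin²ω − cot ω for ω ≠ 0) is smooth, strictly increasing, and is a bijection from (−π,π) onto ℝ; in particular μ(ω) → ±∞ as ω → ±π. -/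
open Real Filter Topology

noncomputable section

/-- `μ(ω) = (2ω − sin 2ω)/(2 sin²ω)`; note that at `ω = 0` Lean's convention `0/0 = 0`
gives exactly the continuous extension `μ(0) = 0`. -/
def muF (ω : ℝ) : ℝ := (2 * ω - Real.sin (2 * ω)) / (2 * Real.sin ω ^ 2)

def cf : ℂ → ℂ := fun z => 2 * z - Complex.sin (2 * z)

lemma cf_diff : Differentiable ℂ cf := by
  unfold cf
  fun_prop

def cg1 : ℂ → ℂ := dslope cf 0
def cg2 : ℂ → ℂ := dslope cg1 0
def cs1 : ℂ → ℂ := dslope Complex.sin 0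

lemma cg1_diff : Differentiable ℂ cg1 := by
  rw [← differentiableOn_univ]
  exact (Complex.differentiableOn_dslope univ_mem).2 cf_diff.differentiableOn

lemma cg2_diff : Differentiable ℂ cg2 := by
  rw [← differentiableOn_univ]
  exact (Complex.differentiableOn_dslope univ_mem).2 cg1_diff.differentiableOn

lemma cs1_diff : Differentiable ℂ cs1 := by
  rw [← differentiableOn_univ]
  exact (Complex.differentiableOn_dslope univ_mem).2
    Complex.differentiable_sin.differentiableOn

lemma cs1_zero : cs1 0 = 1 := by
  rw [cs1, dslope_same, Complex.deriv_sin, Complex.cos_zero]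

lemma cs1_of_ne {z : ℂ} (hz : z ≠ 0) : cs1 z = Complex.sin z / z := by
  rw [cs1, dslope_of_ne _ hz, slope_def_field]
  simp

lemma cf_zero : cf 0 = 0 := by simp [cf]

lemma cg1_zero : cg1 0 = 0 := by
  rw [cg1, dslope_same]
  have h : HasDerivAt cf (2 - Complex.cos (2 * 0) * 2) 0 := by
    have h1 : HasDerivAt (fun z : ℂ => 2 * z) 2 0 := by
      simpa using (hasDerivAt_id (0:ℂ)).const_mul 2
    have h2 : HasDerivAt (fun z : ℂ => Complex.sin (2 * z)) (Complex.cos (2*0) * 2) 0 := by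
      simpa [Function.comp_def] using (Complex.hasDerivAt_sin (2*0)).comp 0 ((hasDerivAt_id (0:ℂ)).const_mul 2)
    exact h1.sub h2
  rw [h.deriv]
  simp

lemma cg1_of_ne {z : ℂ} (hz : z ≠ 0) : cg1 z = cf z / z := by
  rw [cg1, dslope_of_ne _ hz, slope_def_field, cf_zero]
  simp

lemma cg2_of_ne {z : ℂ} (hz : z ≠ 0) : cg2 z = cf z / z ^ 2 := by
  rw [cg2, dslope_of_ne _ hz, slope_def_field, cg1_zero, cg1_of_ne hz]
  rw [sub_zero, sub_zero, div_div, sq]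

lemma real_limit : Tendsto (fun x : ℝ => (2 * x - Real.sin (2 * x)) / x ^ 2)
    (𝓝[≠] (0:ℝ)) (𝓝 0) := by
  refine squeeze_zero_norm' (a := fun x : ℝ => 2 * |x|) ?_ ?_
  · filter_upwards [self_mem_nhdsWithin,
      (eventually_abs_sub_lt (0:ℝ) (by norm_num : (0:ℝ) < 1/2)).filter_mono
        nhdsWithin_le_nhds] with x hx hx'
    rw [sub_zero] at hx'
    have hx0 : x ≠ 0 := hx
    have hb : |2 * x| ≤ 1 := by rw [abs_mul]; rw [abs_two]; linarith [abs_nonneg x]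
    have := Real.sin_bound hb
    have h1 : |2 * x - Real.sin (2 * x)| ≤ |2*x|^3/6 + |2*x| ^ 4 * (5/96) := by
      have : |2*x - (2*x - (2*x)^3/6)| = |2*x|^3/6 := by
        rw [show 2*x - (2*x - (2*x)^3/6) = (2*x)^3/6 by ring, abs_div, abs_pow]
        norm_num
      calc |2 * x - Real.sin (2*x)|
          ≤ |2*x - (2*x - (2*x)^3/6)| + |Real.sin (2*x) - (2*x - (2*x)^3/6)| := by
            have := abs_sub (2*x - (2*x - (2*x)^3/6)) (Real.sin (2*x) - (2*x - (2*x)^3/6))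
            rw [show 2*x - (2*x - (2*x)^3/6) - (Real.sin (2*x) - (2*x - (2*x)^3/6))
              = 2*x - Real.sin (2*x) by ring] at this
            exact this
        _ ≤ |2*x|^3/6 + |2*x| ^ 4 * (5/96) := by
            rw [this]; gcongr
            have h4 : |2*x|^5 ≤ |2*x|^4 := by
              rw [pow_succ]; exact mul_le_of_le_one_right (pow_nonneg (abs_nonneg _) 4) hb
            linarith [Real.sin_bound hb, pow_nonneg (abs_nonneg (2*x)) 4]
    have hx2 : (0:ℝ) < x ^ 2 := by positivity
    rw [Real.norm_eq_abs, abs_div, abs_pow, sq_abs, div_le_iff₀ hx2]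
    have habs : |x| ≤ 1/2 := le_of_lt hx'
    have h2 : |2*x|^3/6 + |2*x|^4 * (5/96) ≤ 2 * |x| * x ^ 2 := by
      rw [abs_mul, abs_two]
      have hxx : x ^ 2 = |x|^2 := (sq_abs x).symm
      nlinarith [abs_nonneg x, pow_nonneg (abs_nonneg x) 3, mul_le_mul_of_nonneg_left habs (pow_nonneg (abs_nonneg x) 3)]
    linarith
  · have : Tendsto (fun x : ℝ => 2 * |x|) (𝓝 (0:ℝ)) (𝓝 (2 * |(0:ℝ)|)) := by
      exact (continuous_const.mul continuous_abs).tendsto 0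
    simpa using this.mono_left nhdsWithin_le_nhds

lemma cg2_zero : cg2 0 = 0 := by
  have h1 : Tendsto (fun x : ℝ => cg2 (x : ℂ)) (𝓝[≠] (0:ℝ)) (𝓝 (cg2 0)) := by
    exact (cg2_diff.continuous.tendsto' 0 _ rfl).comp
      ((Complex.continuous_ofReal.tendsto 0).mono_left nhdsWithin_le_nhds)
  have h2 : Tendsto (fun x : ℝ => cg2 (x : ℂ)) (𝓝[≠] (0:ℝ)) (𝓝 ((0:ℝ):ℂ)) := by
    have : Tendsto (fun x : ℝ => ((( 2*x - Real.sin (2*x)) / x^2 : ℝ) : ℂ))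
        (𝓝[≠] (0:ℝ)) (𝓝 ((0:ℝ):ℂ)) :=
      (Complex.continuous_ofReal.tendsto 0).comp real_limit
    refine this.congr' ?_
    filter_upwards [self_mem_nhdsWithin] with x hx
    have hx0 : (x:ℂ) ≠ 0 := by exact_mod_cast hx
    rw [cg2_of_ne hx0, cf]
    push_cast
    ring
  have := tendsto_nhds_unique h1 h2
  simpa using this

def cG : ℂ → ℂ := fun z => cg2 z / (2 * cs1 z ^ 2)


lemma muF_eq_cG (x : ℝ) : ((muF x : ℝ) : ℂ) = cG (x : ℂ) := by
  rcases eq_or_ne x 0 with rfl | hx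
  · simp [muF, cG, cg2_zero]
  · have hx0 : (x : ℂ) ≠ 0 := by exact_mod_cast hx
    rw [cG, cg2_of_ne hx0, cs1_of_ne hx0, muF, cf]
    rcases eq_or_ne (Real.sin x) 0 with hs | hs
    · have : Complex.sin (x:ℂ) = 0 := by
        rw [← Complex.ofReal_sin, hs, Complex.ofReal_zero]
      rw [this, hs]
      simp
    · have hcs : Complex.sin (x:ℂ) ≠ 0 := by
        rw [← Complex.ofReal_sin]
        exact_mod_cast hs
      push_cast
      field_simp

lemma cG_diffAt {z : ℂ} (hz : cs1 z ≠ 0) : ∀ᶠ w in 𝓝 z, DifferentiableAt ℂ cG w := by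
  have hopen : IsOpen {w : ℂ | cs1 w ≠ 0} := isOpen_ne.preimage cs1_diff.continuous
  filter_upwards [hopen.mem_nhds hz] with w hw
  exact (cg2_diff w).div ((differentiableAt_const 2).mul ((cs1_diff w).pow 2))
    (by intro h; apply hw; 
        have : (2:ℂ) ≠ 0 := two_ne_zero
        rcases mul_eq_zero.1 h with h | h
        · exact absurd h this
        · exact pow_eq_zero_iff two_ne_zero |>.1 h)

lemma muF_contDiffAt {x : ℝ} (hx : cs1 (x:ℂ) ≠ 0) : ContDiffAt ℝ (⊤ : ℕ∞) muF x := by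
  have hG : AnalyticAt ℂ cG (x : ℂ) := by
    obtain ⟨s, hs, hso⟩ := eventually_nhds_iff.1 (cG_diffAt hx)
    exact DifferentiableOn.analyticAt (fun w hw => (hs w hw).differentiableWithinAt)
      (hso.1.mem_nhds hso.2)
  have h1 : AnalyticAt ℝ cG (x : ℂ) := hG.restrictScalars
  have h2 : AnalyticAt ℝ (fun t : ℝ => cG (t : ℂ)) x :=
    h1.comp (Complex.ofRealCLM.analyticAt x)
  have h3 : AnalyticAt ℝ (fun t : ℝ => (cG (t : ℂ)).re) x :=
    (Complex.reCLM.analyticAt _).comp h2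
  have h4 : AnalyticAt ℝ muF x := by
    refine h3.congr ?_
    filter_upwards with t
    rw [← muF_eq_cG t, Complex.ofReal_re]
  exact h4.contDiffAt

lemma key_pos : ∀ ω ∈ Set.Ioo (0:ℝ) π, 0 < Real.sin ω - ω * Real.cos ω := by
  have hmono : StrictMonoOn (fun x : ℝ => Real.sin x - x * Real.cos x) (Set.Icc 0 π) := by
    apply strictMonoOn_of_deriv_pos (convex_Icc 0 π)
    · fun_prop
    · intro x hx
      rw [interior_Icc] at hx
      have hd : HasDerivAt (fun x : ℝ => Real.sin x - x * Real.cos x)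
          (Real.cos x - (1 * Real.cos x + x * (-Real.sin x))) x :=
        (Real.hasDerivAt_sin x).sub ((hasDerivAt_id x).mul (Real.hasDerivAt_cos x))
      rw [hd.deriv]
      have := Real.sin_pos_of_pos_of_lt_pi hx.1 hx.2
      have := hx.1
      nlinarith
  intro ω hω
  have := hmono (Set.mem_Icc.2 ⟨le_refl 0, Real.pi_pos.le⟩)
    (Set.mem_Icc.2 ⟨hω.1.le, hω.2.le⟩) hω.1
  simpa using this

lemma muF_hasDeriv {ω : ℝ} (hs : Real.sin ω ≠ 0) :
    HasDerivAt muF (2 * (Real.sin ω - ω * Real.cos ω) / Real.sin ω ^ 3) ω := by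
  have hN : HasDerivAt (fun ω : ℝ => 2 * ω - Real.sin (2 * ω))
      (2 - Real.cos (2 * ω) * 2) ω := by
    have h1 : HasDerivAt (fun ω : ℝ => 2 * ω) 2 ω := by
      simpa using (hasDerivAt_id ω).const_mul 2
    have h2 : HasDerivAt (fun ω : ℝ => Real.sin (2 * ω)) (Real.cos (2 * ω) * 2) ω := by
      simpa [Function.comp_def] using (Real.hasDerivAt_sin (2 * ω)).comp ω ((hasDerivAt_id ω).const_mul 2)
    exact h1.sub h2
  have hD : HasDerivAt (fun ω : ℝ => 2 * Real.sin ω ^ 2)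
      (2 * (2 * Real.sin ω * Real.cos ω)) ω := by
    have : HasDerivAt (fun ω : ℝ => Real.sin ω ^ 2)
        (2 * Real.sin ω ^ (2-1) * Real.cos ω) ω := (Real.hasDerivAt_sin ω).pow 2
    simpa [mul_comm, mul_assoc, mul_left_comm] using this.const_mul 2
  have hD0 : 2 * Real.sin ω ^ 2 ≠ 0 := by positivity
  have h : HasDerivAt muF _ ω := hN.div hD hD0
  convert h using 1
  rw [Real.sin_two_mul, Real.cos_two_mul]
  have hpy : Real.sin ω ^ 2 + Real.cos ω ^ 2 = 1 := Real.sin_sq_add_cos_sq ω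
  field_simp
  ring_nf

lemma sin_ne_of_mem {ω : ℝ} (hω : ω ∈ Set.Ioo (-π) π) (h0 : ω ≠ 0) : Real.sin ω ≠ 0 :=
  fun h => h0 ((Real.sin_eq_zero_iff_of_lt_of_lt hω.1 hω.2).1 h)

lemma muF_smooth : ContDiffOn ℝ (⊤ : ℕ∞) muF (Set.Ioo (-π) π) := by
  intro x hx
  apply ContDiffAt.contDiffWithinAt
  apply muF_contDiffAt
  rcases eq_or_ne x 0 with rfl | h0
  · rw [Complex.ofReal_zero, cs1_zero]; exact one_ne_zero
  · have hx0 : (x:ℂ) ≠ 0 := by exact_mod_cast h0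
    rw [cs1_of_ne hx0, ← Complex.ofReal_sin]
    exact div_ne_zero (by exact_mod_cast sin_ne_of_mem hx h0) hx0

lemma muF_zero : muF 0 = 0 := by simp [muF]

lemma deriv_pos {x : ℝ} (hx : x ∈ Set.Ioo (-π) π) (h0 : x ≠ 0) : 0 < deriv muF x := by
  have hs := sin_ne_of_mem hx h0
  rw [(muF_hasDeriv hs).deriv]
  rcases h0.lt_or_gt with h | h
  · -- x < 0
    have hx' : -x ∈ Set.Ioo (0:ℝ) π := ⟨by linarith, by linarith [hx.1]⟩
    have hk := key_pos _ hx'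
    rw [Real.sin_neg, Real.cos_neg] at hk
    have hsneg : Real.sin x < 0 := by
      have := Real.sin_pos_of_pos_of_lt_pi hx'.1 hx'.2
      rw [Real.sin_neg] at this; linarith
    exact div_pos_of_neg_of_neg (by nlinarith) (Odd.pow_neg (by decide) hsneg)
  · -- 0 < x
    have hx' : x ∈ Set.Ioo (0:ℝ) π := ⟨h, hx.2⟩
    have hk := key_pos _ hx'
    have hspos : 0 < Real.sin x := Real.sin_pos_of_pos_of_lt_pi hx'.1 hx'.2
    exact div_pos (by linarith) (pow_pos hspos 3)

lemma muF_mono : StrictMonoOn muF (Set.Ioo (-π) π) := by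
  have hpi := Real.pi_pos
  have hc : ContinuousOn muF (Set.Ioo (-π) π) := muF_smooth.continuousOn
  have hsub1 : Set.Ioc (-π) 0 ⊆ Set.Ioo (-π) π := fun x hx => ⟨hx.1, lt_of_le_of_lt hx.2 hpi⟩
  have hsub2 : Set.Ico 0 π ⊆ Set.Ioo (-π) π := fun x hx => ⟨lt_of_lt_of_le (by linarith) hx.1, hx.2⟩
  have m1 : StrictMonoOn muF (Set.Ioc (-π) 0) := by
    apply strictMonoOn_of_deriv_pos (convex_Ioc _ _) (hc.mono hsub1)
    intro x hx
    rw [interior_Ioc] at hx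
    exact deriv_pos ⟨hx.1, by linarith [hx.2]⟩ (ne_of_lt hx.2)
  have m2 : StrictMonoOn muF (Set.Ico 0 π) := by
    apply strictMonoOn_of_deriv_pos (convex_Ico _ _) (hc.mono hsub2)
    intro x hx
    rw [interior_Ico] at hx
    exact deriv_pos ⟨by linarith [hx.1], hx.2⟩ (ne_of_gt hx.1)
  intro x hx y hy hxy
  rcases le_or_gt y 0 with hy0 | hy0
  · exact m1 ⟨hx.1, by linarith⟩ ⟨hy.1, hy0⟩ hxy
  rcases le_or_gt 0 x with hx0 | hx0
  · exact m2 ⟨hx0, hx.2⟩ ⟨by linarith, hy.2⟩ hxy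
  · calc muF x < muF 0 := m1 ⟨hx.1, hx0.le⟩ ⟨by linarith, le_refl 0⟩ hx0
      _ < muF y := m2 ⟨le_refl 0, hpi⟩ ⟨hy0.le, hy.2⟩ hy0

lemma muF_top : Tendsto muF (𝓝[<] π) atTop := by
  have hpi := Real.pi_pos
  have hA : Tendsto (fun ω : ℝ => 2 * ω - Real.sin (2 * ω)) (𝓝[<] π) (𝓝 (2 * π)) := by
    have : Tendsto (fun ω : ℝ => 2 * ω - Real.sin (2 * ω)) (𝓝 π)
        (𝓝 (2 * π - Real.sin (2 * π))) :=
      ((continuous_const.mul continuous_id).sub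
        (Real.continuous_sin.comp (continuous_const.mul continuous_id))).tendsto π
    rw [show Real.sin (2 * π) = 0 by rw [two_mul]; simpa using Real.sin_add_pi π] at this
    simpa using this.mono_left nhdsWithin_le_nhds
  have hB : Tendsto (fun ω : ℝ => 2 * Real.sin ω ^ 2) (𝓝[<] π) (𝓝[>] 0) := by
    rw [tendsto_nhdsWithin_iff]
    constructor
    · have : Tendsto (fun ω : ℝ => 2 * Real.sin ω ^ 2) (𝓝 π) (𝓝 (2 * Real.sin π ^ 2)) :=
        (continuous_const.mul (Real.continuous_sin.pow 2)).tendsto π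
      rw [Real.sin_pi] at this
      simpa using this.mono_left nhdsWithin_le_nhds
    · filter_upwards [Ioo_mem_nhdsLT_of_mem (Set.mem_Ioc.2 ⟨hpi, le_refl π⟩)] with x hx
      have := Real.sin_pos_of_pos_of_lt_pi hx.1 hx.2
      exact Set.mem_Ioi.2 (by positivity)
  have h := (hA.pos_mul_atTop (by positivity) hB.inv_tendsto_nhdsGT_zero)
  refine h.congr (fun ω => ?_)
  simp [muF, div_eq_mul_inv]

lemma muF_bot : Tendsto muF (𝓝[>] (-π)) atBot := by
  have hpi := Real.pi_pos
  have hA : Tendsto (fun ω : ℝ => 2 * ω - Real.sin (2 * ω)) (𝓝[>] (-π)) (𝓝 (2 * (-π))) := by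
    have : Tendsto (fun ω : ℝ => 2 * ω - Real.sin (2 * ω)) (𝓝 (-π))
        (𝓝 (2 * (-π) - Real.sin (2 * (-π)))) :=
      ((continuous_const.mul continuous_id).sub
        (Real.continuous_sin.comp (continuous_const.mul continuous_id))).tendsto (-π)
    have hz : Real.sin (2 * (-π)) = 0 := by
      rw [show (2 : ℝ) * (-π) = -(2 * π) by ring, Real.sin_neg, two_mul]
      simpa using Real.sin_add_pi π
    rw [hz, sub_zero] at this
    exact this.mono_left nhdsWithin_le_nhds
  have hB : Tendsto (fun ω : ℝ => 2 * Real.sin ω ^ 2) (𝓝[>] (-π)) (𝓝[>] 0) := by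
    rw [tendsto_nhdsWithin_iff]
    constructor
    · have : Tendsto (fun ω : ℝ => 2 * Real.sin ω ^ 2) (𝓝 (-π)) (𝓝 (2 * Real.sin (-π) ^ 2)) :=
        (continuous_const.mul (Real.continuous_sin.pow 2)).tendsto (-π)
      rw [Real.sin_neg, Real.sin_pi] at this
      simpa using this.mono_left nhdsWithin_le_nhds
    · filter_upwards [Ioo_mem_nhdsGT_of_mem (Set.mem_Ico.2 ⟨le_refl (-π),
        show -π < (0:ℝ) by linarith⟩)] with x hx
      have : 0 < Real.sin (-x) := Real.sin_pos_of_pos_of_lt_pi (by linarith [hx.2]) (by linarith [hx.1])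
      rw [Real.sin_neg] at this
      have hs : Real.sin x ≠ 0 := by linarith
      exact Set.mem_Ioi.2 (by positivity)
  have h := (hA.neg_mul_atTop (by linarith) hB.inv_tendsto_nhdsGT_zero)
  refine h.congr (fun ω => ?_)
  simp [muF, div_eq_mul_inv]

lemma muF_bijOn : Set.BijOn muF (Set.Ioo (-π) π) Set.univ := by
  have hpi := Real.pi_pos
  refine ⟨fun x _ => trivial, muF_mono.injOn, ?_⟩
  intro y _
  have hne1 : (𝓝[<] π).NeBot := inferInstance
  have hne2 : (𝓝[>] (-π)).NeBot := inferInstance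
  have h1 : ∀ᶠ x in 𝓝[<] π, y < muF x ∧ x ∈ Set.Ioo (-π) π := by
    filter_upwards [muF_top.eventually_gt_atTop y,
      Ioo_mem_nhdsLT_of_mem (Set.mem_Ioc.2 ⟨neg_lt_self hpi, le_refl π⟩)] with x h hx
    exact ⟨h, hx⟩
  have h2 : ∀ᶠ x in 𝓝[>] (-π), muF x < y ∧ x ∈ Set.Ioo (-π) π := by
    filter_upwards [muF_bot.eventually_lt_atBot y,
      Ioo_mem_nhdsGT_of_mem (Set.mem_Ico.2 ⟨le_refl (-π), neg_lt_self hpi⟩)] with x h hx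
    exact ⟨h, hx⟩
  obtain ⟨a, hya, ha⟩ := h1.exists
  obtain ⟨b, hby, hb⟩ := h2.exists
  have hba : b < a := by
    by_contra hab
    push_neg at hab
    have := muF_mono.monotoneOn ha hb hab
    linarith
  have hIcc : Set.Icc b a ⊆ Set.Ioo (-π) π := fun x hx =>
    ⟨lt_of_lt_of_le hb.1 hx.1, lt_of_le_of_lt hx.2 ha.2⟩
  have hcont : ContinuousOn muF (Set.Icc b a) := muF_smooth.continuousOn.mono hIcc
  have := intermediate_value_Icc hba.le hcont
  obtain ⟨x, hx, hxy⟩ := this (Set.mem_Icc.2 ⟨hby.le, hya.le⟩)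
  exact ⟨x, hIcc hx, hxy⟩

lemma muF_alt : ∀ ω ∈ Set.Ioo (-π) π, ω ≠ 0 →
    muF ω = ω / Real.sin ω ^ 2 - Real.cos ω / Real.sin ω := by
  intro ω hω h0
  have hs := sin_ne_of_mem hω h0
  rw [muF, Real.sin_two_mul]
  field_simp

/-- The function `μ` on `(−π,π)` defined by
`μ(ω) = (2ω − sin 2ω)/(2 sin²ω)` for `ω ≠ 0` and `μ(0) = 0` (equivalently
`μ(ω) = ω/sin²ω − cot ω` for `ω ≠ 0`) is smooth, strictly increasing and a bijection from
`(−π,π)` onto `ℝ`; in particular `μ(ω) → ±∞` as `ω → ±π`. -/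
theorem statement10 :
    (∀ ω ∈ Set.Ioo (-Real.pi) Real.pi, ω ≠ 0 →
      muF ω = ω / Real.sin ω ^ 2 - Real.cos ω / Real.sin ω) ∧
    muF 0 = 0 ∧
    ContDiffOn ℝ (⊤ : ℕ∞) muF (Set.Ioo (-Real.pi) Real.pi) ∧
    StrictMonoOn muF (Set.Ioo (-Real.pi) Real.pi) ∧
    Set.BijOn muF (Set.Ioo (-Real.pi) Real.pi) Set.univ ∧
    Filter.Tendsto muF (nhdsWithin Real.pi (Set.Iio Real.pi)) Filter.atTop ∧
    Filter.Tendsto muF (nhdsWithin (-Real.pi) (Set.Ioi (-Real.pi))) Filter.atBot :=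
  ⟨muF_alt, muF_zero, muF_smooth, muF_mono, muF_bijOn, muF_top, muF_bot⟩

end
end
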